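/- If f : ℝ → ℝ is bounded continuous, then for every δ > 0, δ ‖(T_δ² f)'‖ ≤ 34 ‖f - T_δ f‖ in the sup norm, where T_δ² f = T_δ(T_δ f). -/

import Mathlib

/-! Write `u = f - T f`, `g = T² f`, `M = ‖u‖` and `S = ‖g'‖`. Since `T f = T u + g`, we get
`‖(T f)'‖ ≤ 2M/δ + S`, so `g' = (T f(· + δ) - T f)/δ` is `2(2M/δ + S)/δ`-Lipschitz and the
second-order Taylor estimate gives `‖g - T g + (δ/2) g'‖ ≤ (2M + δS)/3`. As `g - T g = T² u` has
norm at most `M`, this yields `(δ/2) S ≤ M + (2M + δS)/3`, i.e. `δ S ≤ 10 M`. -/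

/-- Forward Steklov operator `T_δ f(x) = (1/δ) ∫₀^δ f(x+t) dt`. -/
noncomputable def steklov (δ : ℝ) (f : ℝ → ℝ) : ℝ → ℝ :=
  fun x => (1 / δ) * ∫ t in (0:ℝ)..δ, f (x + t)

open Set

theorem abs_sub_sub_mul_deriv_le {g : ℝ → ℝ} (hg : Differentiable ℝ g) {L : ℝ}
    (hL : ∀ x y, |deriv g y - deriv g x| ≤ L * |y - x|) (x : ℝ) {t : ℝ} (ht : 0 ≤ t) :
    |g (x + t) - g x - t * deriv g x| ≤ L / 2 * t ^ 2 := by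
  have hrem : ∀ s, HasDerivAt (fun s => g (x + s) - g x - s * deriv g x)
      (deriv g (x + s) - deriv g x) s := fun s => by
    have hshift : HasDerivAt (fun s => g (x + s)) (deriv g (x + s)) s :=
      (hg (x + s)).hasDerivAt.comp_const_add x s
    simpa using (hshift.sub_const (g x)).fun_sub ((hasDerivAt_id s).mul_const (deriv g x))
  have hbound : ∀ s, HasDerivAt (fun s => L / 2 * s ^ 2) (L * s) s := fun s =>
    ((hasDerivAt_pow 2 s).const_mul (L / 2)).congr_deriv (by ring)
  refine image_norm_le_of_norm_deriv_right_le_deriv_boundary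
    (f := fun s => g (x + s) - g x - s * deriv g x)
    (fun s _ => (hrem s).continuousAt.continuousWithinAt) (fun s _ => (hrem s).hasDerivWithinAt)
    (by simp) hbound (fun s hs => ?_) ⟨ht, le_rfl⟩
  simpa [abs_of_nonneg hs.1] using hL x (x + s)

section

variable {f g : ℝ → ℝ} {δ : ℝ}

theorem hasDerivAt_steklov (hf : Continuous f) (x : ℝ) :
    HasDerivAt (steklov δ f) ((f (x + δ) - f x) / δ) x := by
  have hsplit : steklov δ f =
      fun y => (1 / δ) * ((∫ u in (0:ℝ)..y + δ, f u) - ∫ u in (0:ℝ)..y, f u) := by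
    funext y
    rw [steklov, intervalIntegral.integral_comp_add_left f y, add_zero,
      intervalIntegral.integral_interval_sub_left (hf.intervalIntegrable _ _)
        (hf.intervalIntegrable _ _)]
  have hupper := (hf.integral_hasStrictDerivAt 0 (x + δ)).hasDerivAt.comp_add_const x δ
  have hlower := (hf.integral_hasStrictDerivAt 0 x).hasDerivAt
  rw [hsplit]
  exact ((hupper.fun_sub hlower).const_mul (1 / δ)).congr_deriv (by ring)

theorem deriv_steklov (hf : Continuous f) (x : ℝ) :
    deriv (steklov δ f) x = (f (x + δ) - f x) / δ :=
  (hasDerivAt_steklov hf x).deriv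

theorem differentiable_steklov (hf : Continuous f) : Differentiable ℝ (steklov δ f) :=
  fun x => (hasDerivAt_steklov hf x).differentiableAt

theorem continuous_steklov (hf : Continuous f) : Continuous (steklov δ f) :=
  (differentiable_steklov hf).continuous

theorem steklov_sub (hf : Continuous f) (hg : Continuous g) :
    steklov δ (f - g) = steklov δ f - steklov δ g := by
  funext x
  have hshift : ∀ {h : ℝ → ℝ}, Continuous h →
      IntervalIntegrable (fun t => h (x + t)) MeasureTheory.volume 0 δ :=
    fun hh => (hh.comp (continuous_const_add x)).intervalIntegrable _ _
  simp only [steklov, Pi.sub_apply]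
  rw [intervalIntegral.integral_sub (hshift hf) (hshift hg), mul_sub]

theorem abs_steklov_le (hδ : 0 < δ) {K : ℝ} (hK : ∀ y, |f y| ≤ K) (x : ℝ) :
    |steklov δ f x| ≤ K := by
  have hint : |∫ t in (0:ℝ)..δ, f (x + t)| ≤ K * |δ - 0| := by
    simpa only [Real.norm_eq_abs] using
      intervalIntegral.norm_integral_le_of_norm_le_const (f := fun t => f (x + t))
        fun t _ => hK (x + t)
  rw [sub_zero, abs_of_pos hδ] at hint
  rw [steklov, abs_mul, abs_of_pos (one_div_pos.mpr hδ)]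
  calc 1 / δ * |∫ t in (0:ℝ)..δ, f (x + t)| ≤ 1 / δ * (K * δ) := by gcongr
    _ = K := by field_simp

theorem abs_deriv_steklov_le (hf : Continuous f) (hδ : 0 < δ) {K : ℝ} (hK : ∀ y, |f y| ≤ K)
    (x : ℝ) : |deriv (steklov δ f) x| ≤ 2 * K / δ := by
  rw [deriv_steklov hf, abs_div, abs_of_pos hδ]
  gcongr
  linarith [abs_sub (f (x + δ)) (f x), hK (x + δ), hK x]

theorem abs_sub_deriv_steklov_le (hf : Continuous f) (hδ : 0 < δ) {B : ℝ}
    (hB : ∀ x y, |f y - f x| ≤ B * |y - x|) (x y : ℝ) :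
    |deriv (steklov δ f) y - deriv (steklov δ f) x| ≤ 2 * B / δ * |y - x| := by
  rw [deriv_steklov hf, deriv_steklov hf, ← sub_div, abs_div, abs_of_pos hδ,
    div_mul_eq_mul_div]
  gcongr
  have hshift := hB (x + δ) (y + δ)
  rw [show y + δ - (x + δ) = y - x by ring] at hshift
  rw [show f (y + δ) - f y - (f (x + δ) - f x) = f (y + δ) - f (x + δ) - (f y - f x) by ring]
  linarith [abs_sub (f (y + δ) - f (x + δ)) (f y - f x), hB x y]


theorem abs_sub_steklov_add_deriv_le (hg : Differentiable ℝ g) (hδ : 0 < δ)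
    {L : ℝ} (hL : ∀ x y, |deriv g y - deriv g x| ≤ L * |y - x|) (x : ℝ) :
    |g x - steklov δ g x + δ / 2 * deriv g x| ≤ L * δ ^ 2 / 6 := by
  have hshift : IntervalIntegrable (fun t => g (x + t)) MeasureTheory.volume 0 δ :=
    (hg.continuous.comp (continuous_const_add x)).intervalIntegrable _ _
  have hlinear : IntervalIntegrable (fun t => t * deriv g x) MeasureTheory.volume 0 δ :=
    (continuous_mul_const _).intervalIntegrable _ _
  have hremainder : g x - steklov δ g x + δ / 2 * deriv g x =
      -(1 / δ) * ∫ t in (0:ℝ)..δ, g (x + t) - g x - t * deriv g x := by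
    rw [intervalIntegral.integral_sub (hshift.sub intervalIntegrable_const) hlinear,
      intervalIntegral.integral_sub hshift intervalIntegrable_const,
      intervalIntegral.integral_const, intervalIntegral.integral_mul_const, integral_id, steklov]
    field_simp
    ring
  have hbound : |∫ t in (0:ℝ)..δ, g (x + t) - g x - t * deriv g x| ≤ L / 2 * (δ ^ 3 / 3) := by
    have hpow : ∫ t in (0:ℝ)..δ, L / 2 * t ^ 2 = L / 2 * (δ ^ 3 / 3) := by
      rw [intervalIntegral.integral_const_mul, integral_pow]
      norm_num
    rw [← hpow, ← Real.norm_eq_abs]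
    refine intervalIntegral.norm_integral_le_of_norm_le hδ.le
      (Filter.Eventually.of_forall fun t ht => ?_)
      (((continuous_pow 2).const_mul _).intervalIntegrable _ _)
    exact abs_sub_sub_mul_deriv_le hg hL x ht.1.le
  rw [hremainder, abs_mul, abs_neg, abs_of_pos (one_div_pos.mpr hδ)]
  calc 1 / δ * |∫ t in (0:ℝ)..δ, g (x + t) - g x - t * deriv g x|
      ≤ 1 / δ * (L / 2 * (δ ^ 3 / 3)) := by gcongr
    _ = L * δ ^ 2 / 6 := by field_simp; ring

theorem abs_steklov_sub_steklov_steklov_le (hf : Continuous f) (hδ : 0 < δ) {M : ℝ}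
    (hM : ∀ y, |f y - steklov δ f y| ≤ M) (x : ℝ) :
    |steklov δ f x - steklov δ (steklov δ f) x| ≤ M := by
  simpa only [steklov_sub hf (continuous_steklov hf), Pi.sub_apply] using
    abs_steklov_le (f := f - steklov δ f) hδ hM x

theorem abs_deriv_steklov_le_of_abs_sub_steklov_le (hf : Continuous f) (hδ : 0 < δ) {M S : ℝ}
    (hM : ∀ y, |f y - steklov δ f y| ≤ M)
    (hS : ∀ y, |deriv (steklov δ (steklov δ f)) y| ≤ S) (x : ℝ) :
    |deriv (steklov δ f) x| ≤ 2 * M / δ + S := by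
  have hTf := continuous_steklov (δ := δ) hf
  have hdecomp : steklov δ f = steklov δ (f - steklov δ f) + steklov δ (steklov δ f) := by
    rw [steklov_sub hf hTf, sub_add_cancel]
  rw [hdecomp, deriv_add (differentiable_steklov (hf.sub hTf) x) (differentiable_steklov hTf x)]
  exact (abs_add_le _ _).trans (add_le_add (abs_deriv_steklov_le (hf.sub hTf) hδ hM x) (hS x))

theorem mul_abs_deriv_steklov_steklov_le (hf : Continuous f) (hδ : 0 < δ) {M S : ℝ}
    (hM : ∀ y, |f y - steklov δ f y| ≤ M)
    (hS : ∀ y, |deriv (steklov δ (steklov δ f)) y| ≤ S) (x : ℝ) :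
    δ * |deriv (steklov δ (steklov δ f)) x| ≤ 10 / 3 * M + 2 / 3 * (δ * S) := by
  have hTf := continuous_steklov (δ := δ) hf
  have hTfLip : ∀ x y, |steklov δ f y - steklov δ f x| ≤ (2 * M / δ + S) * |y - x| :=
    fun x y => by
      simpa only [Real.norm_eq_abs] using convex_univ.norm_image_sub_le_of_norm_deriv_le
        (fun z _ => differentiable_steklov hf z)
        (fun z _ => abs_deriv_steklov_le_of_abs_sub_steklov_le hf hδ hM hS z)
        (mem_univ x) (mem_univ y)
  have htaylor := abs_sub_steklov_add_deriv_le (differentiable_steklov hTf) hδ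
    (abs_sub_deriv_steklov_le hTf hδ hTfLip) x
  have hcontract := abs_steklov_sub_steklov_steklov_le hTf hδ
    (abs_steklov_sub_steklov_steklov_le hf hδ hM) x
  set g := steklov δ (steklov δ f)
  have hconst : 2 * (2 * M / δ + S) / δ * δ ^ 2 / 6 = (2 * M + δ * S) / 3 := by
    field_simp; ring
  have hhalf : |δ / 2 * deriv g x| ≤ M + (2 * M + δ * S) / 3 := by
    have := abs_sub (g x - steklov δ g x + δ / 2 * deriv g x) (g x - steklov δ g x)
    rw [add_sub_cancel_left] at this
    linarith
  rw [abs_mul, abs_of_pos (half_pos hδ)] at hhalf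
  linarith

end

theorem sup_deriv_steklov_sq_le (f : ℝ → ℝ) (hf : Continuous f)
    (hb : BddAbove (Set.range fun x => |f x|)) (δ : ℝ) (hδ : 0 < δ) :
    δ * (⨆ x, |deriv (steklov δ (steklov δ f)) x|) ≤ 34 * ⨆ x, |f x - steklov δ f x| := by
  obtain ⟨K, hK⟩ := hb
  have hfK : ∀ x, |f x| ≤ K := fun x => hK ⟨x, rfl⟩
  have hTfK : ∀ x, |steklov δ f x| ≤ K := abs_steklov_le hδ hfK
  have hM : ∀ x, |f x - steklov δ f x| ≤ ⨆ x, |f x - steklov δ f x| := le_ciSup ⟨K + K, by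
    rintro _ ⟨x, rfl⟩; linarith [abs_sub (f x) (steklov δ f x), hfK x, hTfK x]⟩
  have hS : ∀ x, |deriv (steklov δ (steklov δ f)) x| ≤
      ⨆ x, |deriv (steklov δ (steklov δ f)) x| := le_ciSup ⟨2 * K / δ, by
    rintro _ ⟨x, rfl⟩; exact abs_deriv_steklov_le (continuous_steklov hf) hδ hTfK x⟩
  have hSle := (Real.mul_iSup_of_nonneg hδ.le _).trans_le
    (ciSup_le (mul_abs_deriv_steklov_steklov_le hf hδ hM hS))
  linarith [(abs_nonneg _).trans (hM 0)]
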